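/- Consider H = H(n,12,6|σ) where σ = (6,6), and (α,β) = (3,3). Then H is 3-(3,3)-colourable and (n+1)-(3,3)-colourable, but for n ≥ 7 it is not 4-(3,3)-colourable; hence for n ≥ 7 its (3,3)-spectrum has a gap even though it has no monochromatic zone. -/
import Mathlib


open Finset

/-- `K` is an edge of the σ-hypergraph `H(n,r,q | σ)`: the multiset of non-zero
cardinalities of the intersections of `K` with the `n` classes equals `σ`. -/
def sigmaEdge (n q : ℕ) (σ : Multiset ℕ) (K : Finset (Fin n × Fin q)) : Prop :=
  (((Finset.univ : Finset (Fin n)).val.map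
      fun i => (K.filter fun v => v.1 = i).card).filter fun m => m ≠ 0) = σ

/-- `c` is an `(α,β)`-colouring: every edge contains at least `α` and at most `β` colours. -/
def isABColouring (n q : ℕ) (σ : Multiset ℕ) (α β : ℕ) (c : Fin n × Fin q → ℕ) : Prop :=
  ∀ K : Finset (Fin n × Fin q), sigmaEdge n q σ K →
    α ≤ (K.image c).card ∧ (K.image c).card ≤ β

/-- `c` uses exactly `k` colours. -/
def usesExactly (n q k : ℕ) (c : Fin n × Fin q → ℕ) : Prop :=
  ((Finset.univ : Finset (Fin n × Fin q)).image c).card = k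

/-- every class of the σ-hypergraph is monochromatic under `c`. -/
def classesMonochromatic (n q : ℕ) (c : Fin n × Fin q → ℕ) : Prop :=
  ∀ v w : Fin n × Fin q, v.1 = w.1 → c v = c w

/-- `σ` is a partition of `r` (a multiset of positive integers summing to `r`). -/
def IsPartitionOf (σ : Multiset ℕ) (r : ℕ) : Prop := σ.sum = r ∧ 0 ∉ σ

namespace Stmt18
variable {n : ℕ}

def cls (n : ℕ) (i : Fin n) : Finset (Fin n × Fin 6) := univ.filter (fun v => v.1 = i)

lemma cls_eq (i : Fin n) : cls n i = ({i} : Finset (Fin n)) ×ˢ (univ : Finset (Fin 6)) := by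
  ext ⟨a, b⟩; simp [cls, Finset.mem_product, eq_comm]

lemma cls_card (i : Fin n) : (cls n i).card = 6 := by
  rw [cls_eq, Finset.card_product]; simp

lemma mem_cls {i : Fin n} {v : Fin n × Fin 6} : v ∈ cls n i ↔ v.1 = i := by
  simp [cls]

lemma cls_disj {i j : Fin n} (h : i ≠ j) : Disjoint (cls n i) (cls n j) := by
  rw [Finset.disjoint_left]
  intro v hv hw
  exact h (mem_cls.1 hv ▸ (mem_cls.1 hw ▸ rfl) )

lemma union_filter {i j : Fin n} {K : Finset (Fin n × Fin 6)} (hK : K = cls n i ∪ cls n j)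
    (k : Fin n) :
    K.filter (fun v => v.1 = k) = if k = i ∨ k = j then cls n k else ∅ := by
  subst hK
  by_cases h : k = i ∨ k = j
  · rw [if_pos h]
    ext v
    simp only [Finset.mem_filter, Finset.mem_union, mem_cls]
    rcases h with h | h <;> subst h <;> tauto
  · rw [if_neg h]
    push_neg at h
    ext v
    simp only [Finset.mem_filter, Finset.mem_union, mem_cls, Finset.notMem_empty, iff_false]
    rintro ⟨hv | hv, rfl⟩
    · exact h.1 hv
    · exact h.2 hv

lemma edge_sigma {i j : Fin n} (h : i ≠ j) : sigmaEdge n 6 {6, 6} (cls n i ∪ cls n j) := by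
  unfold sigmaEdge
  set f : Fin n → ℕ := fun k => ((cls n i ∪ cls n j).filter (fun v => v.1 = k)).card with hf
  have hfi : f i = 6 := by rw [hf]; simp [union_filter rfl i, cls_card]
  have hfj : f j = 6 := by rw [hf]; simp [union_filter rfl j, cls_card]
  have hfo : ∀ k : Fin n, k ≠ i → k ≠ j → f k = 0 := by
    intro k hk1 hk2
    rw [hf]; simp only
    rw [union_filter rfl k, if_neg (by tauto)]; simp
  have hi : i ∈ (univ : Finset (Fin n)).val := Finset.mem_univ i
  have hj : j ∈ (univ : Finset (Fin n)).val.erase i :=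
    Multiset.mem_erase_of_ne h.symm |>.2 (Finset.mem_univ j)
  have hu : (univ : Finset (Fin n)).val = i ::ₘ j ::ₘ ((univ : Finset (Fin n)).val.erase i).erase j := by
    rw [Multiset.cons_erase hj, Multiset.cons_erase hi]
  rw [hu]
  rw [Multiset.map_cons, Multiset.map_cons, Multiset.filter_cons_of_pos, Multiset.filter_cons_of_pos]
  · have : Multiset.filter (fun m => m ≠ 0)
        ((((univ : Finset (Fin n)).val.erase i).erase j).map f) = 0 := by
      rw [Multiset.filter_eq_nil]
      intro a ha
      rw [Multiset.mem_map] at ha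
      obtain ⟨k, hk, rfl⟩ := ha
      have nd : ((univ : Finset (Fin n)).val.erase i).Nodup :=
        (Finset.univ.nodup).erase i
      have hk2 := (nd.mem_erase_iff.1 hk).1
      have hk1 := ((Finset.univ.nodup).mem_erase_iff.1 (Multiset.mem_of_mem_erase hk)).1
      simp [hfo k hk1 hk2]
    rw [this, hfi, hfj]
    rfl
  · simp [hfj]
  · simp [hfi]

lemma sigma_structure {K : Finset (Fin n × Fin 6)} (h : sigmaEdge n 6 {6, 6} K) :
    ∃ i j : Fin n, i ≠ j ∧ K = cls n i ∪ cls n j := by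
  set f : Fin n → ℕ := fun k => (K.filter (fun v => v.1 = k)).card with hf
  have hM : (((univ : Finset (Fin n)).val.map f).filter fun m => m ≠ 0) = {6, 6} := h
  -- two indices with fiber card 6
  have hcount : ((univ : Finset (Fin n)).filter (fun k => 6 = f k)).card = 2 := by
    have h1 : Multiset.count 6 (((univ : Finset (Fin n)).val.map f).filter fun m => m ≠ 0) = 2 := by
      rw [hM]; rfl
    rw [Multiset.count_filter_of_pos (by norm_num)] at h1
    rw [Multiset.count_map] at h1
    exact h1
  obtain ⟨i, j, hij, hset⟩ := Finset.card_eq_two.1 hcount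
  have hfi : f i = 6 := by
    have : i ∈ (univ : Finset (Fin n)).filter (fun k => 6 = f k) := by
      rw [hset]; simp
    exact (Finset.mem_filter.1 this).2.symm
  have hfj : f j = 6 := by
    have : j ∈ (univ : Finset (Fin n)).filter (fun k => 6 = f k) := by
      rw [hset]; simp
    exact (Finset.mem_filter.1 this).2.symm
  -- K.card = 12
  have hKcard : K.card = 12 := by
    have h1 : K.card = ∑ k : Fin n, f k :=
      Finset.card_eq_sum_card_fiberwise (fun x _ => Finset.mem_univ x.1)
    have h2 : ∑ k : Fin n, f k = (((univ : Finset (Fin n)).val.map f)).sum := by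
      rfl
    have h3 : (((univ : Finset (Fin n)).val.map f)).sum
        = ((((univ : Finset (Fin n)).val.map f).filter fun m => m ≠ 0)).sum
          + ((((univ : Finset (Fin n)).val.map f).filter fun m => ¬ m ≠ 0)).sum := by
      rw [← Multiset.sum_add, Multiset.filter_add_not]
    have h4 : ((((univ : Finset (Fin n)).val.map f).filter fun m => ¬ m ≠ 0)).sum = 0 := by
      apply Multiset.sum_eq_zero
      intro x hx
      have := Multiset.of_mem_filter hx
      simpa using this
    rw [h1, h2, h3, h4, hM]
    rfl
  -- classes contained
  have hsub : ∀ k : Fin n, f k = 6 → cls n k ⊆ K := by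
    intro k hk
    have hsub1 : K.filter (fun v => v.1 = k) ⊆ cls n k := by
      intro v hv
      rw [mem_cls]
      exact (Finset.mem_filter.1 hv).2
    have : K.filter (fun v => v.1 = k) = cls n k :=
      Finset.eq_of_subset_of_card_le hsub1 (by rw [cls_card]; exact hk.ge)
    rw [← this]
    exact Finset.filter_subset _ _
  refine ⟨i, j, hij, ?_⟩
  have hsubU : cls n i ∪ cls n j ⊆ K :=
    Finset.union_subset (hsub i hfi) (hsub j hfj)
  have hcardU : (cls n i ∪ cls n j).card = 12 := by
    rw [Finset.card_union_of_disjoint (cls_disj hij), cls_card, cls_card]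
  exact (Finset.eq_of_subset_of_card_le hsubU (by rw [hKcard, hcardU])).symm

lemma image_cls (i : Fin n) (g : Fin n → Fin 6 → ℕ) :
    (cls n i).image (fun v : Fin n × Fin 6 => g v.1 v.2) = (univ : Finset (Fin 6)).image (g i) := by
  ext x
  simp only [Finset.mem_image, mem_cls, Finset.mem_univ, true_and]
  constructor
  · rintro ⟨v, hv, rfl⟩; exact ⟨v.2, by rw [hv]⟩
  · rintro ⟨b, rfl⟩; exact ⟨(i, b), rfl, rfl⟩

lemma img1 : (univ : Finset (Fin 6)).image (fun b : Fin 6 => b.val % 3) = {0, 1, 2} := by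
  decide

lemma img2 (m a : ℕ) :
    (univ : Finset (Fin 6)).image (fun b : Fin 6 => if b = 0 then m else a) = {m, a} := by
  ext x
  simp only [Finset.mem_image, Finset.mem_insert, Finset.mem_singleton, Finset.mem_univ, true_and]
  constructor
  · rintro ⟨b, rfl⟩; split <;> simp
  · rintro (rfl | rfl)
    · exact ⟨0, by simp⟩
    · exact ⟨1, by norm_num⟩

lemma part1 (hn : 7 ≤ n) :
    ∃ c : Fin n × Fin 6 → ℕ, isABColouring n 6 {6, 6} 3 3 c ∧ usesExactly n 6 3 c := by
  refine ⟨fun v => v.2.val % 3, ?_, ?_⟩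
  · intro K hK
    obtain ⟨i, j, hij, rfl⟩ := sigma_structure hK
    rw [Finset.image_union,
      image_cls i (fun _ b => b.val % 3), image_cls j (fun _ b => b.val % 3), img1]
    simp
  · unfold usesExactly
    have h1 : ((Finset.univ : Finset (Fin n × Fin 6))).image (fun v => v.2.val % 3)
        = {0, 1, 2} := by
      have i0 : Fin n := ⟨0, by omega⟩
      apply Finset.Subset.antisymm
      · intro x hx
        obtain ⟨v, -, rfl⟩ := Finset.mem_image.1 hx
        have : v.2.val % 3 < 3 := Nat.mod_lt _ (by norm_num)
        simp only [Finset.mem_insert, Finset.mem_singleton]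
        omega
      · have hsub : (cls n i0) ⊆ univ := Finset.subset_univ _
        calc ({0,1,2} : Finset ℕ) = (cls n i0).image (fun v : Fin n × Fin 6 => v.2.val % 3) := by
              rw [image_cls i0 (fun _ b => b.val % 3), img1]
          _ ⊆ _ := Finset.image_subset_image hsub
    rw [h1]; rfl

lemma part2 (hn : 7 ≤ n) :
    ∃ c : Fin n × Fin 6 → ℕ, isABColouring n 6 {6, 6} 3 3 c ∧ usesExactly n 6 (n + 1) c := by
  refine ⟨fun v => if v.2 = 0 then n else v.1.val, ?_, ?_⟩
  · intro K hK
    obtain ⟨i, j, hij, rfl⟩ := sigma_structure hK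
    rw [Finset.image_union,
      image_cls i (fun a b => if b = 0 then n else a.val),
      image_cls j (fun a b => if b = 0 then n else a.val), img2, img2]
    have hval : i.val ≠ j.val := fun h => hij (Fin.val_injective h)
    have h1 : ({n, i.val} : Finset ℕ) ∪ {n, j.val} = {n, i.val, j.val} := by
      ext x; simp only [Finset.mem_union, Finset.mem_insert, Finset.mem_singleton]; tauto
    rw [h1]
    have hcard : ({n, i.val, j.val} : Finset ℕ).card = 3 := by
      rw [Finset.card_insert_of_notMem (by
          simp only [Finset.mem_insert, Finset.mem_singleton]
          push_neg
          exact ⟨(i.isLt).ne', (j.isLt).ne'⟩),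
        Finset.card_insert_of_notMem (by simpa using hval),
        Finset.card_singleton]
    omega
  · unfold usesExactly
    have h1 : ((Finset.univ : Finset (Fin n × Fin 6))).image
        (fun v : Fin n × Fin 6 => if v.2 = 0 then n else v.1.val)
        = insert n (Finset.range n) := by
      ext x
      simp only [Finset.mem_image, Finset.mem_univ, true_and, Finset.mem_insert,
        Finset.mem_range]
      constructor
      · rintro ⟨v, rfl⟩
        split
        · exact Or.inl rfl
        · exact Or.inr v.1.isLt
      · rintro (rfl | hx)
        · exact ⟨(⟨0, by omega⟩, 0), by simp⟩
        · exact ⟨(⟨x, hx⟩, 1), by norm_num⟩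
    rw [h1, Finset.card_insert_of_notMem (by simp), Finset.card_range]

lemma part3 (hn : 7 ≤ n) :
    ¬ ∃ c : Fin n × Fin 6 → ℕ, isABColouring n 6 {6, 6} 3 3 c ∧ usesExactly n 6 4 c := by
  rintro ⟨c, hc, hu⟩
  set S : Fin n → Finset ℕ := fun i => (cls n i).image c with hS
  set U : Finset ℕ := (Finset.univ : Finset (Fin n × Fin 6)).image c with hUdef
  have hU : U.card = 4 := hu
  have key : ∀ i j : Fin n, i ≠ j → (S i ∪ S j).card = 3 := by
    intro i j hij
    have h := hc _ (edge_sigma hij)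
    rw [Finset.image_union] at h
    exact le_antisymm h.2 h.1
  have hSU : ∀ i, S i ⊆ U := fun i => Finset.image_subset_image (Finset.subset_univ _)
  have hmemS : ∀ v : Fin n × Fin 6, c v ∈ S v.1 :=
    fun v => Finset.mem_image_of_mem c (mem_cls.2 rfl)
  have hUsub : ∀ x ∈ U, ∃ i, x ∈ S i := by
    intro x hx
    obtain ⟨v, -, rfl⟩ := Finset.mem_image.1 hx
    exact ⟨v.1, hmemS v⟩
  have hne : ∀ i, (S i).Nonempty := fun i => ⟨c (i, 0), hmemS (i, 0)⟩
  have hexj : ∀ i : Fin n, ∃ j, j ≠ i := by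
    intro i
    by_cases h : i.val = 0
    · exact ⟨⟨1, by omega⟩, fun he => by rw [Fin.ext_iff] at he; simp at he; omega⟩
    · exact ⟨⟨0, by omega⟩, fun he => by rw [Fin.ext_iff] at he; simp at he; omega⟩
  have hcard2 : ∀ i, (S i).card ≤ 2 := by
    intro i
    by_contra h
    push_neg at h
    have hsubj : ∀ j : Fin n, j ≠ i → S j ⊆ S i := by
      intro j hji
      have h3 := key i j hji.symm
      have hle : (S i ∪ S j).card ≤ (S i).card := by omega
      have heq : S i = S i ∪ S j := Finset.eq_of_subset_of_card_le Finset.subset_union_left hle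
      rw [heq]
      exact Finset.subset_union_right
    have hUS : U ⊆ S i := by
      intro x hx
      obtain ⟨k, hk⟩ := hUsub x hx
      by_cases hki : k = i
      · exact hki ▸ hk
      · exact hsubj k hki hk
    obtain ⟨j, hji⟩ := hexj i
    have h4 : (S i).card ≤ 3 := by
      have := key i j hji.symm
      have hsub : (S i).card ≤ (S i ∪ S j).card :=
        Finset.card_le_card Finset.subset_union_left
      omega
    have := Finset.card_le_card hUS
    omega
  have hSne : ∀ i j : Fin n, i ≠ j → S i ≠ S j := by
    intro i j hij heq
    have h3 := key i j hij
    rw [heq, Finset.union_self] at h3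
    have := hcard2 j
    omega
  have hone : ∀ i j : Fin n, i ≠ j → (S i).card = 1 → (S j).card = 1 → False := by
    intro i j hij h1 h2
    have h3 := key i j hij
    have := Finset.card_union_le (S i) (S j)
    omega
  -- the set of classes with a 2-element colour set
  set F2 : Finset (Fin n) := univ.filter (fun i => (S i).card = 2) with hF2
  have hF2card : n - 1 ≤ F2.card := by
    have hsplit := Finset.card_filter_add_card_filter_not
      (s := (univ : Finset (Fin n))) (p := fun i => (S i).card = 2)
    have hneg : (univ.filter (fun i => ¬ (S i).card = 2)).card ≤ 1 := by
      apply Finset.card_le_one.2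
      intro a ha b hb
      simp only [Finset.mem_filter] at ha hb
      by_contra hab
      apply hone a b hab
      · have := hcard2 a
        have := Finset.card_pos.2 (hne a)
        omega
      · have := hcard2 b
        have := Finset.card_pos.2 (hne b)
        omega
    rw [Finset.card_univ, Fintype.card_fin, ← hF2] at hsplit
    omega
  set Fimg : Finset (Finset ℕ) := F2.image S with hFimg
  have hFimgcard : F2.card = Fimg.card := by
    rw [hFimg]
    exact (Finset.card_image_of_injOn (fun a _ b _ hab => by
      by_contra h; exact hSne a b h hab)).symm
  have hsubPC : Fimg ⊆ U.powersetCard 2 := by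
    intro A hA
    obtain ⟨i, hi, rfl⟩ := Finset.mem_image.1 hA
    exact Finset.mem_powersetCard.2 ⟨hSU i, (Finset.mem_filter.1 hi).2⟩
  have hPCcard : (U.powersetCard 2).card = 6 := by
    rw [Finset.card_powersetCard, hU]
    decide
  have hFeq : Fimg = U.powersetCard 2 :=
    Finset.eq_of_subset_of_card_le hsubPC (by omega)
  -- find a pair of disjoint 2-sets
  have hFne : Fimg.Nonempty := Finset.card_pos.1 (by omega)
  obtain ⟨A, hA⟩ := hFne
  have hApc := hsubPC hA
  obtain ⟨hAsub, hAcard⟩ := Finset.mem_powersetCard.1 hApc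
  have hB : U \ A ∈ Fimg := by
    rw [hFeq]
    exact Finset.mem_powersetCard.2 ⟨Finset.sdiff_subset, by rw [Finset.card_sdiff_of_subset hAsub, hU, hAcard]⟩
  obtain ⟨i, -, hSi⟩ := Finset.mem_image.1 hA
  obtain ⟨j, -, hSj⟩ := Finset.mem_image.1 hB
  have hAne : A ≠ U \ A := by
    intro h
    obtain ⟨x, hx⟩ : A.Nonempty := Finset.card_pos.1 (by omega)
    have := Finset.mem_sdiff.1 (h ▸ hx)
    exact this.2 hx
  have hij : i ≠ j := by
    intro h
    rw [h, hSj] at hSi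
    exact hAne hSi.symm
  have h3 := key i j hij
  rw [hSi, hSj, Finset.union_sdiff_of_subset hAsub] at h3
  omega

end Stmt18

theorem stmt18 (n : ℕ) (hn : 7 ≤ n) :
    (∃ c : Fin n × Fin 6 → ℕ,
        isABColouring n 6 {6, 6} 3 3 c ∧ usesExactly n 6 3 c) ∧
    (∃ c : Fin n × Fin 6 → ℕ,
        isABColouring n 6 {6, 6} 3 3 c ∧ usesExactly n 6 (n + 1) c) ∧
    ¬ ∃ c : Fin n × Fin 6 → ℕ,
        isABColouring n 6 {6, 6} 3 3 c ∧ usesExactly n 6 4 c :=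
  ⟨Stmt18.part1 hn, Stmt18.part2 hn, Stmt18.part3 hn⟩
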